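/- Let l ≥ 1 be an integer, let λ > 0, r ∈ (1,2) and δ ≥ 0, and define D(e) = ((eᵀe)^{1−1/r} − λ)/((eᵀe)^{1−1/r} + λ) for e ∈ ℝ^l. Let (d_k)_{k≥1} be any sequence in ℝ^l with ‖d_k‖ ≤ δ for all k, and let (a_k)_{k≥1} and (b_k)_{k≥0} be sequences in ℝ^l satisfying the cascade b_k = D(b_{k−1})·b_{k−1} − d_k and a_{k+1} = D(a_k)·a_k + b_k for all k ≥ 1. Then there exist a constant R > 0 and an integer N ∈ ℕ such that ‖a_k‖ ≤ R and ‖b_k‖ ≤ R for all k ≥ N. -/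
import Mathlib

open scoped InnerProductSpace
open Filter

/-- The ultra-local-model observer gain function D of Proposition 1. -/
noncomputable def Dfun (l : ℕ) (lam r : ℝ) (e : EuclideanSpace ℝ (Fin l)) : ℝ :=
  (⟪e, e⟫_ℝ ^ (1 - 1 / r) - lam) / (⟪e, e⟫_ℝ ^ (1 - 1 / r) + lam)

lemma lemA (l : ℕ) (lam r : ℝ) (hlam : 0 < lam) (e : EuclideanSpace ℝ (Fin l)) :
    ‖Dfun l lam r e • e‖ ≤ ‖e‖ := by
  have hq : (0:ℝ) ≤ ⟪e,e⟫_ℝ := real_inner_self_nonneg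
  have hx0 : 0 ≤ (⟪e,e⟫_ℝ) ^ (1 - 1/r) := Real.rpow_nonneg hq _
  set x := (⟪e,e⟫_ℝ) ^ (1 - 1/r) with hxdef
  have hden : 0 < x + lam := by linarith
  have hD : |Dfun l lam r e| ≤ 1 := by
    rw [Dfun, abs_div, abs_of_pos hden, div_le_one hden]
    rw [abs_le]
    constructor <;> linarith
  calc ‖Dfun l lam r e • e‖ = |Dfun l lam r e| * ‖e‖ := by
        rw [norm_smul, Real.norm_eq_abs]
    _ ≤ 1 * ‖e‖ := mul_le_mul_of_nonneg_right hD (norm_nonneg _)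
    _ = ‖e‖ := one_mul _

lemma lemB (lam r c : ℝ) (hlam : 0 < lam) (hr1 : 1 < r) (hr2 : r < 2) (hc : 0 ≤ c) :
    ∃ M : ℝ, 0 < M ∧ ∀ (l : ℕ) (e : EuclideanSpace ℝ (Fin l)), M ≤ ‖e‖ →
      ‖Dfun l lam r e • e‖ ≤ ‖e‖ - c := by
  have hr0 : 0 < r := by linarith
  have hs2 : 0 < 2 - 2/r := by
    have : 2/r < 2 := by rw [div_lt_iff₀ hr0]; nlinarith
    linarith
  have hs1 : 0 < 2/r - 1 := by
    have : 1 < 2/r := by rw [lt_div_iff₀ hr0]; linarith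
    linarith
  have t2 := tendsto_rpow_atTop hs2
  have t1 := tendsto_rpow_atTop hs1
  have h1 : ∀ᶠ t : ℝ in atTop, lam ≤ t ^ (2-2/r) := t2.eventually_ge_atTop lam
  have h2 : ∀ᶠ t : ℝ in atTop, c / lam ≤ t ^ (2/r-1) := t1.eventually_ge_atTop _
  have h3 : ∀ᶠ t : ℝ in atTop, (1:ℝ) ≤ t := eventually_ge_atTop 1
  obtain ⟨M, hM⟩ := (h1.and (h2.and h3)).exists_forall_of_atTop
  refine ⟨max M 1, lt_of_lt_of_le one_pos (le_max_right _ _), ?_⟩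
  intro l e he
  obtain ⟨hlamx, hcx, ht1⟩ := hM ‖e‖ (le_trans (le_max_left _ _) he)
  set t := ‖e‖ with htdef
  have ht0 : 0 < t := lt_of_lt_of_le one_pos ht1
  have hq : ⟪e,e⟫_ℝ = t ^ (2:ℕ) := real_inner_self_eq_norm_sq e
  have hxeq : (⟪e,e⟫_ℝ) ^ (1 - 1/r) = t ^ (2 - 2/r) := by
    rw [hq, ← Real.rpow_natCast t 2, ← Real.rpow_mul ht0.le]
    norm_num
    ring_nf
  set x := t ^ (2 - 2/r) with hxdef
  have hx0 : 0 < x := Real.rpow_pos_of_pos ht0 _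
  have hden : 0 < x + lam := by linarith
  have hDval : Dfun l lam r e = (x - lam)/(x + lam) := by
    rw [Dfun, hxeq]
  have hDnn : 0 ≤ (x - lam)/(x + lam) := div_nonneg (by linarith) hden.le
  have hkey : ((x - lam)/(x + lam)) * t = t - 2*lam*t/(x+lam) := by
    field_simp
    ring
  have hb1 : 2*lam*t/(2*x) ≤ 2*lam*t/(x+lam) := by
    apply div_le_div_of_nonneg_left (by positivity) hden (by linarith)
  have hb2 : 2*lam*t/(2*x) = lam * t ^ (2/r - 1) := by
    have hpow : t ^ (2/r - 1) = t / x := by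
      rw [hxdef, show (2/r - 1 : ℝ) = 1 - (2 - 2/r) by ring, Real.rpow_sub ht0, Real.rpow_one]
    rw [hpow]
    field_simp
  have hb3 : c ≤ lam * t ^ (2/r - 1) := by
    have := mul_le_mul_of_nonneg_left hcx hlam.le
    rwa [mul_div_cancel₀ _ (ne_of_gt hlam)] at this
  have hfinal : c ≤ 2*lam*t/(x+lam) := by
    calc c ≤ lam * t ^ (2/r-1) := hb3
      _ = 2*lam*t/(2*x) := hb2.symm
      _ ≤ 2*lam*t/(x+lam) := hb1
  calc ‖Dfun l lam r e • e‖ = |Dfun l lam r e| * ‖e‖ := by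
        rw [norm_smul, Real.norm_eq_abs]
    _ = ((x - lam)/(x + lam)) * t := by rw [hDval, abs_of_nonneg hDnn]
    _ = t - 2*lam*t/(x+lam) := hkey
    _ ≤ t - c := by linarith

lemma ultim (v : ℕ → ℝ) (p M : ℝ) (hp : 0 ≤ p) (hM : 0 < M) (k0 : ℕ)
    (h1 : ∀ k, k0 ≤ k → v (k+1) ≤ v k + p)
    (h2 : ∀ k, k0 ≤ k → M ≤ v k → v (k+1) ≤ v k - 1) :
    ∃ N : ℕ, ∀ k, N ≤ k → v k ≤ M + p := by
  have step : ∀ k, k0 ≤ k → v k ≤ M + p → v (k+1) ≤ M + p := by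
    intro k hk hv
    by_cases h : M ≤ v k
    · linarith [h2 k hk h]
    · push_neg at h; linarith [h1 k hk]
  have descent : ∀ n : ℕ, v (k0 + n) ≤ max (M + p) (v k0 - n) := by
    intro n
    induction n with
    | zero => simp
    | succ n ih =>
      by_cases h : v (k0 + n) ≤ M + p
      · have := step (k0 + n) (Nat.le_add_right _ _) h
        have heq : k0 + (n+1) = (k0 + n) + 1 := by omega
        rw [heq]
        exact le_max_of_le_left this
      · push_neg at h
        have hMv : M ≤ v (k0 + n) := by linarith
        have := h2 (k0 + n) (Nat.le_add_right _ _) hMv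
        have heq : k0 + (n+1) = (k0 + n) + 1 := by omega
        rw [heq]
        rcases le_or_gt (v k0 - n) (M + p) with hcase | hcase
        · have : v (k0 + n) ≤ M + p := by
            have := ih
            rw [max_eq_left hcase] at this
            linarith
          linarith
        · have hmax : max (M + p) (v k0 - (n:ℝ)) = v k0 - n := le_of_lt hcase |> max_eq_right
          rw [hmax] at ih
          apply le_max_of_le_right
          push_cast
          linarith
  set n0 := ⌈v k0 - (M + p)⌉₊ with hn0
  refine ⟨k0 + n0, ?_⟩
  have hbase : v (k0 + n0) ≤ M + p := by
    have := descent n0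
    have hle : v k0 - (n0:ℝ) ≤ M + p := by
      have := Nat.le_ceil (v k0 - (M + p))
      linarith
    rw [max_eq_left hle] at this
    exact this
  intro k hk
  obtain ⟨m, rfl⟩ := Nat.exists_eq_add_of_le hk
  induction m with
  | zero => simpa using hbase
  | succ m ih =>
    have heq : k0 + n0 + (m+1) = (k0 + n0 + m) + 1 := by omega
    rw [heq]
    exact step _ (by omega) (ih (by omega))

/-- Proposition 2 (robustness): the cascaded perturbed recursions
b_k = D(b_{k-1}) b_{k-1} - d_k and a_{k+1} = D(a_k) a_k + b_k with ‖d_k‖ ≤ δ are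
ultimately bounded. -/
theorem stmt_13 (l : ℕ) (hl : 1 ≤ l) (lam r δ : ℝ) (hlam : 0 < lam)
    (hr : r ∈ Set.Ioo (1:ℝ) 2) (hδ : 0 ≤ δ)
    (d a b : ℕ → EuclideanSpace ℝ (Fin l))
    (hd : ∀ k, 1 ≤ k → ‖d k‖ ≤ δ)
    (hb : ∀ k, 1 ≤ k → b k = Dfun l lam r (b (k - 1)) • b (k - 1) - d k)
    (ha : ∀ k, 1 ≤ k → a (k + 1) = Dfun l lam r (a k) • a k + b k) :
    ∃ R : ℝ, 0 < R ∧ ∃ N : ℕ, ∀ k ≥ N, ‖a k‖ ≤ R ∧ ‖b k‖ ≤ R := by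
  obtain ⟨hr1, hr2⟩ := hr
  -- b part
  obtain ⟨Mb, hMb, hMbspec⟩ := lemB lam r (δ + 1) hlam hr1 hr2 (by linarith)
  have hbrec : ∀ k : ℕ, b (k+1) = Dfun l lam r (b k) • b k - d (k+1) := by
    intro k
    have := hb (k+1) (by omega)
    simpa using this
  have h1b : ∀ k, 0 ≤ k → ‖b (k+1)‖ ≤ ‖b k‖ + δ := by
    intro k _
    rw [hbrec k]
    calc ‖Dfun l lam r (b k) • b k - d (k+1)‖ ≤ ‖Dfun l lam r (b k) • b k‖ + ‖d (k+1)‖ :=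
          norm_sub_le _ _
      _ ≤ ‖b k‖ + δ := add_le_add (lemA l lam r hlam _) (hd (k+1) (by omega))
  have h2b : ∀ k, 0 ≤ k → Mb ≤ ‖b k‖ → ‖b (k+1)‖ ≤ ‖b k‖ - 1 := by
    intro k _ hMk
    rw [hbrec k]
    calc ‖Dfun l lam r (b k) • b k - d (k+1)‖ ≤ ‖Dfun l lam r (b k) • b k‖ + ‖d (k+1)‖ :=
          norm_sub_le _ _
      _ ≤ (‖b k‖ - (δ + 1)) + δ := add_le_add (hMbspec l (b k) hMk) (hd (k+1) (by omega))
      _ = ‖b k‖ - 1 := by ring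
  obtain ⟨Nb, hNb⟩ := ultim (fun k => ‖b k‖) δ Mb hδ hMb 0 h1b h2b
  set Rb := Mb + δ with hRb
  have hRbpos : 0 < Rb := by positivity
  -- a part
  obtain ⟨Ma, hMa, hMaspec⟩ := lemB lam r (Rb + 1) hlam hr1 hr2 (by linarith)
  set k0 := max 1 Nb with hk0
  have h1a : ∀ k, k0 ≤ k → ‖a (k+1)‖ ≤ ‖a k‖ + Rb := by
    intro k hk
    rw [ha k (le_trans (le_max_left _ _) hk)]
    calc ‖Dfun l lam r (a k) • a k + b k‖ ≤ ‖Dfun l lam r (a k) • a k‖ + ‖b k‖ :=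
          norm_add_le _ _
      _ ≤ ‖a k‖ + Rb := add_le_add (lemA l lam r hlam _) (hNb k (le_trans (le_max_right _ _) hk))
  have h2a : ∀ k, k0 ≤ k → Ma ≤ ‖a k‖ → ‖a (k+1)‖ ≤ ‖a k‖ - 1 := by
    intro k hk hMk
    rw [ha k (le_trans (le_max_left _ _) hk)]
    calc ‖Dfun l lam r (a k) • a k + b k‖ ≤ ‖Dfun l lam r (a k) • a k‖ + ‖b k‖ :=
          norm_add_le _ _
      _ ≤ (‖a k‖ - (Rb + 1)) + Rb :=
          add_le_add (hMaspec l (a k) hMk) (hNb k (le_trans (le_max_right _ _) hk))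
      _ = ‖a k‖ - 1 := by ring
  obtain ⟨Na, hNa⟩ := ultim (fun k => ‖a k‖) Rb Ma hRbpos.le hMa k0 h1a h2a
  refine ⟨Ma + Rb, by positivity, max Na Nb, ?_⟩
  intro k hk
  constructor
  · exact hNa k (le_trans (le_max_left _ _) hk)
  · calc ‖b k‖ ≤ Mb + δ := hNb k (le_trans (le_max_right _ _) hk)
      _ = Rb := rfl
      _ ≤ Ma + Rb := by linarith
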